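/- arXiv:2405.02130 — 5 statements merged into one kernel-verified Lean document; each statement's English description precedes it below -/
import Mathlib

section
/- Let (g, ⟨·,·⟩) be a Lie algebra with a non-degenerate symmetric bilinear form, ∗ its Levi–Civita product (defined by 2⟨x∗y, z⟩ = ⟨[x,y],z⟩ − ⟨[y,z],x⟩ + ⟨[z,x],y⟩), and let I be a one-dimensional totally isotropic subspace that is a two-sided ideal of (g, ∗). Then I^⊥ is a right ideal of (g, ∗) if and only if I^⊥ ∗ I = 0. -/
/-! Metric compatibility of the Levi–Civita product says that every left multiplication
`L_y = y ∗ ·` is skew-adjoint: `⟨y ∗ x, z⟩ = -⟨y ∗ z, x⟩`. Hence `y ∗ z ⊥ I` for all `z` iff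
`y ∗ x ⊥ z` for all `x ∈ I` and all `z`, which by non-degeneracy means `y ∗ I = 0`. -/

namespace LinearMap.BilinForm

variable {R M : Type*} [CommRing R] [AddCommGroup M] [Module R M]

/-- Summing the Koszul formula for `(x, y, z)` and `(x, z, y)`, all bracket terms cancel. -/
theorem apply_swap_eq_neg_of_koszul [NoZeroDivisors R] [NeZero (2 : R)]
    {br star : M →ₗ[R] M →ₗ[R] M} (hanti : ∀ x y : M, br x y = -br y x)
    {B : LinearMap.BilinForm R M}
    (hstar : ∀ x y z : M, 2 * B (star x y) z = B (br x y) z - B (br y z) x + B (br z x) y)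
    (x y z : M) : B (star x y) z = -B (star x z) y := by
  have hsum : 2 * (B (star x y) z + B (star x z) y) = 0 := by
    rw [mul_add, hstar, hstar, hanti x z, hanti z y, hanti y x]
    simp only [map_neg, LinearMap.neg_apply]
    ring
  rw [eq_neg_iff_add_eq_zero]
  exact (mul_eq_zero.mp hsum).resolve_left two_ne_zero

theorem forall_apply_mem_orthogonal_iff {B : LinearMap.BilinForm R M} (hrefl : B.IsRefl)
    (hsep : B.SeparatingLeft) {f : M →ₗ[R] M} (hskew : ∀ u v : M, B (f u) v = -B (f v) u)
    (I : Submodule R M) : (∀ z, f z ∈ B.orthogonal I) ↔ ∀ x ∈ I, f x = 0 := by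
  have hortho : ∀ x z : M, B x (f z) = 0 ↔ B (f x) z = 0 := fun x z =>
    ⟨fun h => by rw [hskew, hrefl _ _ h, neg_zero], fun h =>
      hrefl _ _ (by rwa [hskew, neg_eq_zero] at h)⟩
  simp only [mem_orthogonal_iff, hortho]
  exact ⟨fun h x hx => hsep _ fun z => h z x hx,
    fun h z x hx => by rw [h x hx, map_zero, LinearMap.zero_apply]⟩

end LinearMap.BilinForm

theorem stmt3_general {V : Type*} [AddCommGroup V] [Module ℝ V]
    (br : V →ₗ[ℝ] V →ₗ[ℝ] V)
    (hanti : ∀ x y : V, br x y = - br y x)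
    (Bf : LinearMap.BilinForm ℝ V)
    (hsymm : ∀ x y : V, Bf x y = Bf y x)
    (hnd : Bf.Nondegenerate)
    (star : V →ₗ[ℝ] V →ₗ[ℝ] V)
    (hstar : ∀ x y z : V,
      2 * Bf (star x y) z = Bf (br x y) z - Bf (br y z) x + Bf (br z x) y)
    (I : Submodule ℝ V) :
    (∀ y ∈ Bf.orthogonal I, ∀ z : V, star y z ∈ Bf.orthogonal I) ↔
      (∀ y ∈ Bf.orthogonal I, ∀ x ∈ I, star y x = 0) := by
  have hrefl : Bf.IsRefl := fun x y h => by rw [hsymm, h]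
  exact forall₂_congr fun y _ =>
    LinearMap.BilinForm.forall_apply_mem_orthogonal_iff hrefl hnd.1
      (LinearMap.BilinForm.apply_swap_eq_neg_of_koszul hanti hstar y) I

/-- For the Levi–Civita product ∗ and a 1-dimensional totally isotropic
two-sided ideal I of (g,∗), I^⊥ is a right ideal of (g,∗) iff I^⊥ ∗ I = 0. -/
theorem stmt3 {V : Type*} [AddCommGroup V] [Module ℝ V] [FiniteDimensional ℝ V]
    (br : V →ₗ[ℝ] V →ₗ[ℝ] V)
    (hanti : ∀ x y : V, br x y = - br y x)
    (hjac : ∀ x y z : V, br x (br y z) = br (br x y) z + br y (br x z))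
    (Bf : LinearMap.BilinForm ℝ V)
    (hsymm : ∀ x y : V, Bf x y = Bf y x)
    (hnd : Bf.Nondegenerate)
    (star : V →ₗ[ℝ] V →ₗ[ℝ] V)
    (hstar : ∀ x y z : V,
      2 * Bf (star x y) z = Bf (br x y) z - Bf (br y z) x + Bf (br z x) y)
    (I : Submodule ℝ V)
    (hdim : Module.finrank ℝ I = 1)
    (hiso : I ≤ Bf.orthogonal I)
    (hideal : ∀ x ∈ I, ∀ y : V, star x y ∈ I ∧ star y x ∈ I) :
    (∀ y ∈ Bf.orthogonal I, ∀ z : V, star y z ∈ Bf.orthogonal I) ↔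
      (∀ y ∈ Bf.orthogonal I, ∀ x ∈ I, star y x = 0) :=
  stmt3_general br hanti Bf hsymm hnd star hstar I
end

section
/- In the double extension g = ℝa ⊕ B ⊕ ℝd, where B carries a commutative associative product ∘_B and a non-degenerate symmetric form ⟨·,·⟩', and where the product ∘ on g is defined by a∘a = a∘x = x∘a = 0, x∘y = ⟨v(x),y⟩'·a + x∘_B y, a∘d = d∘a = λa, d∘d = βa + a₀ + λd, d∘x = x∘d = ⟨a₀,x⟩'·a + v(x) (for x,y ∈ B, λ,β ∈ ℝ, a₀ ∈ B, v : B → B linear self-adjoint with v(x∘_B y) = v(x)∘_B y), the product ∘ is associative if and only if v² = λv + r_{a₀}, where r_{a₀}(x) = x ∘_B a₀. -/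
/-!
The B-component of the associator `(x ∘ d) ∘ d - x ∘ (d ∘ d)` is exactly `v² x - λ v x - x ∘_B a₀`,
which gives necessity. Conversely, once `v²` is rewritten as `λ v + r_{a₀}`, the rules
`v (x ∘_B y) = v x ∘_B y = x ∘_B v y`, associativity of `∘_B` and the Frobenius and self-adjointness
identities make each of the three components of a general associator vanish.
-/

namespace DoubleExtension

variable {B : Type*} [AddCommGroup B] [Module ℝ B]

/-- The product of `ℝa ⊕ B ⊕ ℝd`, where `(α, x, δ)` stands for `α a + x + δ d`. -/
def mul (circB : B →ₗ[ℝ] B →ₗ[ℝ] B) (Bf : LinearMap.BilinForm ℝ B) (v : B →ₗ[ℝ] B) (a₀ : B)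
    (lam beta : ℝ) (p q : ℝ × B × ℝ) : ℝ × B × ℝ :=
  (Bf (v p.2.1) q.2.1 + lam * (p.1 * q.2.2 + q.1 * p.2.2) + beta * (p.2.2 * q.2.2)
      + p.2.2 * Bf a₀ q.2.1 + q.2.2 * Bf a₀ p.2.1,
   circB p.2.1 q.2.1 + (p.2.2 * q.2.2) • a₀ + p.2.2 • v q.2.1 + q.2.2 • v p.2.1,
   lam * (p.2.2 * q.2.2))

variable {circB : B →ₗ[ℝ] B →ₗ[ℝ] B} {Bf : LinearMap.BilinForm ℝ B} {v : B →ₗ[ℝ] B} {a₀ : B}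
  {lam beta : ℝ}

local notation "m" => mul circB Bf v a₀ lam beta

lemma snd_mul_mul_d_d_left (x : B) : (m (m (0, x, 0) (0, 0, 1)) (0, 0, 1)).2.1 = v (v x) := by
  simp [mul]

lemma snd_mul_mul_d_d_right (x : B) :
    (m (0, x, 0) (m (0, 0, 1) (0, 0, 1))).2.1 = circB x a₀ + lam • v x := by
  simp [mul]

lemma circB_apply_map_of_comm (hcomm : ∀ x y : B, circB x y = circB y x)
    (hvc : ∀ x y : B, v (circB x y) = circB (v x) y) (x y : B) :
    circB x (v y) = circB (v x) y := by
  rw [hcomm, ← hvc, hcomm, hvc]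

lemma fst_mul_assoc (hcomm : ∀ x y : B, circB x y = circB y x)
    (hsymm : ∀ x y : B, Bf x y = Bf y x)
    (hfrob : ∀ x y z : B, Bf (circB x y) z = Bf x (circB y z))
    (hvsa : ∀ x y : B, Bf (v x) y = Bf x (v y))
    (hvc : ∀ x y : B, v (circB x y) = circB (v x) y)
    (hv : ∀ x : B, v (v x) = lam • v x + circB x a₀) (p q r : ℝ × B × ℝ) :
    (m (m p q) r).1 = (m p (m q r)).1 := by
  obtain ⟨α, x, δ⟩ := p
  obtain ⟨β', y, ε⟩ := q
  obtain ⟨γ, z, η⟩ := r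
  have hfrob_a₀ : ∀ u w : B, Bf a₀ (circB u w) = Bf u (circB w a₀) := fun u w => by
    rw [hsymm, hfrob]
  have hvsa_a₀ : Bf a₀ (v x) = Bf x (v a₀) := by rw [← hvsa, hsymm]
  simp only [mul, map_add, map_smul, hvc, hv, circB_apply_map_of_comm hcomm hvc,
    hcomm a₀, LinearMap.add_apply, LinearMap.smul_apply, smul_eq_mul, hfrob, hvsa]
  linear_combination η * hfrob_a₀ x y - δ * hfrob_a₀ y z + ε * η * hvsa_a₀

lemma snd_mul_assoc (hcomm : ∀ x y : B, circB x y = circB y x)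
    (hassoc : ∀ x y z : B, circB (circB x y) z = circB x (circB y z))
    (hvc : ∀ x y : B, v (circB x y) = circB (v x) y)
    (hv : ∀ x : B, v (v x) = lam • v x + circB x a₀) (p q r : ℝ × B × ℝ) :
    (m (m p q) r).2.1 = (m p (m q r)).2.1 := by
  simp only [mul, map_add, map_smul, LinearMap.add_apply, LinearMap.smul_apply, hvc, hv,
    hassoc, circB_apply_map_of_comm hcomm hvc, hcomm a₀]
  module

lemma snd_snd_mul_assoc (p q r : ℝ × B × ℝ) : (m (m p q) r).2.2 = (m p (m q r)).2.2 := by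
  simp only [mul]
  ring

end DoubleExtension

open DoubleExtension in
theorem stmt5_general {B : Type*} [AddCommGroup B] [Module ℝ B]
    (circB : B →ₗ[ℝ] B →ₗ[ℝ] B)
    (hcomm : ∀ x y : B, circB x y = circB y x)
    (hassoc : ∀ x y z : B, circB (circB x y) z = circB x (circB y z))
    (Bf : LinearMap.BilinForm ℝ B)
    (hsymm : ∀ x y : B, Bf x y = Bf y x)
    (hfrob : ∀ x y z : B, Bf (circB x y) z = Bf x (circB y z))
    (v : B →ₗ[ℝ] B)
    (hvsa : ∀ x y : B, Bf (v x) y = Bf x (v y))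
    (hvc : ∀ x y : B, v (circB x y) = circB (v x) y)
    (a₀ : B) (lam beta : ℝ)
    (mul : (ℝ × B × ℝ) → (ℝ × B × ℝ) → (ℝ × B × ℝ))
    (hmul : ∀ p q : ℝ × B × ℝ, mul p q =
      (Bf (v p.2.1) q.2.1 + lam * (p.1 * q.2.2 + q.1 * p.2.2) + beta * (p.2.2 * q.2.2)
          + p.2.2 * Bf a₀ q.2.1 + q.2.2 * Bf a₀ p.2.1,
       circB p.2.1 q.2.1 + (p.2.2 * q.2.2) • a₀ + p.2.2 • v q.2.1 + q.2.2 • v p.2.1,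
       lam * (p.2.2 * q.2.2))) :
    (∀ p q r : ℝ × B × ℝ, mul (mul p q) r = mul p (mul q r)) ↔
      (∀ x : B, v (v x) = lam • v x + circB x a₀) := by
  obtain rfl : mul = DoubleExtension.mul circB Bf v a₀ lam beta := funext₂ hmul
  constructor
  · intro h x
    have hx := congrArg (fun t => t.2.1) (h (0, x, 0) (0, 0, 1) (0, 0, 1))
    simp only [snd_mul_mul_d_d_left, snd_mul_mul_d_d_right] at hx
    rw [hx, add_comm]
  · intro hv p q r
    exact Prod.ext (fst_mul_assoc hcomm hsymm hfrob hvsa hvc hv p q r)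
      (Prod.ext (snd_mul_assoc hcomm hassoc hvc hv p q r)
        (snd_snd_mul_assoc p q r))

/-- In the double extension g = ℝa ⊕ B ⊕ ℝd (encoded as ℝ × B × ℝ, with
a = (1,0,0) and d = (0,0,1)), the extended product ∘ is associative iff
v² = λ·v + r_{a₀}. -/
theorem stmt5 {B : Type*} [AddCommGroup B] [Module ℝ B] [FiniteDimensional ℝ B]
    (circB : B →ₗ[ℝ] B →ₗ[ℝ] B)
    (hcomm : ∀ x y : B, circB x y = circB y x)
    (hassoc : ∀ x y z : B, circB (circB x y) z = circB x (circB y z))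
    (Bf : LinearMap.BilinForm ℝ B)
    (hsymm : ∀ x y : B, Bf x y = Bf y x)
    (hnd : Bf.Nondegenerate)
    (hfrob : ∀ x y z : B, Bf (circB x y) z = Bf x (circB y z))
    (v : B →ₗ[ℝ] B)
    (hvsa : ∀ x y : B, Bf (v x) y = Bf x (v y))
    (hvc : ∀ x y : B, v (circB x y) = circB (v x) y)
    (a₀ : B) (lam beta : ℝ)
    (mul : (ℝ × B × ℝ) → (ℝ × B × ℝ) → (ℝ × B × ℝ))
    (hmul : ∀ p q : ℝ × B × ℝ, mul p q =
      (Bf (v p.2.1) q.2.1 + lam * (p.1 * q.2.2 + q.1 * p.2.2) + beta * (p.2.2 * q.2.2)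
          + p.2.2 * Bf a₀ q.2.1 + q.2.2 * Bf a₀ p.2.1,
       circB p.2.1 q.2.1 + (p.2.2 * q.2.2) • a₀ + p.2.2 • v q.2.1 + q.2.2 • v p.2.1,
       lam * (p.2.2 * q.2.2))) :
    (∀ p q r : ℝ × B × ℝ, mul (mul p q) r = mul p (mul q r)) ↔
      (∀ x : B, v (v x) = lam • v x + circB x a₀) :=
  stmt5_general circB hcomm hassoc Bf hsymm hfrob v hvsa hvc a₀ lam beta mul hmul
end

section
/- In the flat pseudo-Riemannian F double extension g = ℝa ⊕ B ⊕ ℝd with λ ≠ 0, an element e = γ'a + ē + ω'd (γ', ω' ∈ ℝ, ē ∈ B) is a unit for the product ∘ (given by a∘a = a∘x = 0, x∘y = ⟨v(x),y⟩'a + x∘_B y, a∘d = λa, d∘d = βa + a₀ + λd, d∘x = ⟨a₀,x⟩'a + v(x)) if and only if ω' = 1/λ, γ' = −(⟨a₀, ē⟩'/λ + β/λ²), v(ē) = −a₀/λ, and r_ē + v/λ = id_B, where r_ē(x) = x ∘_B ē. -/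
/-!
Testing the unit condition `e ∘ p = p` on `p = d` and on `p = x ∈ B` already forces
`λω' = 1`, `λγ' + βω' + ⟨a₀, ē⟩' = 0`, `v ē + ω' a₀ = 0` and `r_ē + ω' v = id_B`; conversely these
four equations give `e ∘ p = p` for every `p`, since the `a`-component of `e ∘ x` is
`⟨v ē + ω' a₀, x⟩'`. Solving the scalar equations with `λ ≠ 0` gives the stated values.
-/

section DoubleExtension

variable {K B : Type*} [Field K] [AddCommGroup B] [Module K B]
  (circB : B →ₗ[K] B →ₗ[K] B) (Bf : LinearMap.BilinForm K B) (v : B →ₗ[K] B) (a₀ : B)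
  (lam beta : K)

/-- `(γ, x, ω)` stands for `γ a + x + ω d` in `K a ⊕ B ⊕ K d`. -/
def doubleExtMul (p q : K × B × K) : K × B × K :=
  (Bf (v p.2.1) q.2.1 + lam * (p.1 * q.2.2 + q.1 * p.2.2) + beta * (p.2.2 * q.2.2)
      + p.2.2 * Bf a₀ q.2.1 + q.2.2 * Bf a₀ p.2.1,
   circB p.2.1 q.2.1 + (p.2.2 * q.2.2) • a₀ + p.2.2 • v q.2.1 + q.2.2 • v p.2.1,
   lam * (p.2.2 * q.2.2))

theorem doubleExtMul_left_unit_iff (γ ω : K) (ē : B) :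
    (∀ p, doubleExtMul circB Bf v a₀ lam beta (γ, ē, ω) p = p) ↔
      lam * ω = 1 ∧ lam * γ + beta * ω + Bf a₀ ē = 0 ∧ v ē + ω • a₀ = 0 ∧
        ∀ x, circB ē x + ω • v x = x := by
  constructor
  · intro h
    have hd := h (0, 0, 1)
    have hB := fun x => congrArg (·.2.1) (h (0, x, 0))
    simp only [doubleExtMul, Prod.ext_iff, map_zero] at hd hB
    refine ⟨by linear_combination hd.2.2, by linear_combination hd.1, ?_, fun x => ?_⟩
    · simpa [add_comm] using hd.2.1
    · simpa using hB x
  · rintro ⟨hω, hγ, hv, hr⟩ ⟨p₁, x, p₃⟩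
    have hvx : Bf (v ē) x + ω * Bf a₀ x = 0 := by
      simpa using congrArg (Bf · x) hv
    simp only [doubleExtMul, Prod.mk.injEq]
    refine ⟨?_, ?_, ?_⟩
    · linear_combination hvx + p₁ * hω + p₃ * hγ
    · linear_combination (norm := module) hr x + p₃ • hv
    · linear_combination p₃ * hω

end DoubleExtension

theorem stmt11_general {B : Type*} [AddCommGroup B] [Module ℝ B]
    (circB : B →ₗ[ℝ] B →ₗ[ℝ] B)
    (hcomm : ∀ x y : B, circB x y = circB y x)
    (Bf : LinearMap.BilinForm ℝ B)
    (v : B →ₗ[ℝ] B)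
    (a₀ : B) (lam beta : ℝ) (hlam : lam ≠ 0)
    (mul : (ℝ × B × ℝ) → (ℝ × B × ℝ) → (ℝ × B × ℝ))
    (hmul : ∀ p q : ℝ × B × ℝ, mul p q =
      (Bf (v p.2.1) q.2.1 + lam * (p.1 * q.2.2 + q.1 * p.2.2) + beta * (p.2.2 * q.2.2)
          + p.2.2 * Bf a₀ q.2.1 + q.2.2 * Bf a₀ p.2.1,
       circB p.2.1 q.2.1 + (p.2.2 * q.2.2) • a₀ + p.2.2 • v q.2.1 + q.2.2 • v p.2.1,
       lam * (p.2.2 * q.2.2)))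
    (gamma' omega' : ℝ) (ebar : B) :
    (∀ p : ℝ × B × ℝ, mul (gamma', ebar, omega') p = p) ↔
      (omega' = 1 / lam ∧
       gamma' = -(Bf a₀ ebar / lam + beta / lam ^ 2) ∧
       v ebar = (-(1 / lam)) • a₀ ∧
       ∀ x : B, circB x ebar + (1 / lam) • v x = x) := by
  obtain rfl : mul = doubleExtMul circB Bf v a₀ lam beta := funext₂ hmul
  rw [doubleExtMul_left_unit_iff, mul_comm, ← eq_div_iff hlam]
  refine and_congr_right fun hω => ?_
  subst hω
  refine and_congr ?_ (and_congr ?_ (forall_congr' fun x => by rw [hcomm]))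
  · constructor <;> intro h
    · linear_combination (norm := skip) h / lam
      field_simp
      ring
    · rw [h]
      field_simp
      ring
  · rw [neg_smul, eq_neg_iff_add_eq_zero]

/-- In the double extension (encoded on ℝ × B × ℝ, a = (1,0,0),
d = (0,0,1)) with λ ≠ 0, e = γ'a + ē + ω'd is a unit for ∘ iff
ω' = 1/λ, γ' = −(⟨a₀,ē⟩'/λ + β/λ²), v(ē) = −a₀/λ, and r_ē + v/λ = id. -/
theorem stmt11 {B : Type*} [AddCommGroup B] [Module ℝ B] [FiniteDimensional ℝ B]
    (circB : B →ₗ[ℝ] B →ₗ[ℝ] B)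
    (hcomm : ∀ x y : B, circB x y = circB y x)
    (hassoc : ∀ x y z : B, circB (circB x y) z = circB x (circB y z))
    (Bf : LinearMap.BilinForm ℝ B)
    (hsymm : ∀ x y : B, Bf x y = Bf y x)
    (hnd : Bf.Nondegenerate)
    (hfrob : ∀ x y z : B, Bf (circB x y) z = Bf x (circB y z))
    (v : B →ₗ[ℝ] B)
    (hvsa : ∀ x y : B, Bf (v x) y = Bf x (v y))
    (hvc : ∀ x y : B, v (circB x y) = circB (v x) y)
    (a₀ : B) (lam beta : ℝ) (hlam : lam ≠ 0)
    (mul : (ℝ × B × ℝ) → (ℝ × B × ℝ) → (ℝ × B × ℝ))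
    (hmul : ∀ p q : ℝ × B × ℝ, mul p q =
      (Bf (v p.2.1) q.2.1 + lam * (p.1 * q.2.2 + q.1 * p.2.2) + beta * (p.2.2 * q.2.2)
          + p.2.2 * Bf a₀ q.2.1 + q.2.2 * Bf a₀ p.2.1,
       circB p.2.1 q.2.1 + (p.2.2 * q.2.2) • a₀ + p.2.2 • v q.2.1 + q.2.2 • v p.2.1,
       lam * (p.2.2 * q.2.2)))
    (gamma' omega' : ℝ) (ebar : B) :
    (∀ p : ℝ × B × ℝ, mul (gamma', ebar, omega') p = p) ↔
      (omega' = 1 / lam ∧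
       gamma' = -(Bf a₀ ebar / lam + beta / lam ^ 2) ∧
       v ebar = (-(1 / lam)) • a₀ ∧
       ∀ x : B, circB x ebar + (1 / lam) • v x = x) :=
  stmt11_general circB hcomm Bf v a₀ lam beta hlam mul hmul gamma' omega' ebar
end

section
/- In the double extension of a weakly abelian bi-nilpotent Riemannian F-Lie algebra with λ = 0, the identity v² = r_{a₀} together with nilpotency of the product ∘_B implies that v is nilpotent, and consequently the extended product ∘ on g = ℝa ⊕ B ⊕ ℝd is nilpotent (every right multiplication is nilpotent). Specifically: if v : B → B is linear with v(x∘_B y) = v(x)∘_B y and v² = r_{a₀} where every right multiplication r_z of (B, ∘_B) is nilpotent, then v is nilpotent. -/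
theorem Function.iterate_two_mul_eq_of_comp_self_eq {α : Type*} {f g : α → α}
    (h : ∀ x, f (f x) = g x) (n : ℕ) : f^[2 * n] = g^[n] := by
  rw [Function.iterate_mul, show f^[2] = g from funext h]

theorem stmt14_general {B : Type*} [AddCommGroup B] [Module ℝ B]
    (circB : B →ₗ[ℝ] B →ₗ[ℝ] B)
    (hnil : ∀ z : B, ∃ n : ℕ, ∀ x : B, (fun x => circB x z)^[n] x = 0)
    (v : B →ₗ[ℝ] B)
    (a₀ : B)
    (hv2 : ∀ x : B, v (v x) = circB x a₀) :
    ∃ n : ℕ, ∀ x : B, (fun x => v x)^[n] x = 0 := by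
  obtain ⟨n, hn⟩ := hnil a₀
  refine ⟨2 * n, fun x => ?_⟩
  rw [Function.iterate_two_mul_eq_of_comp_self_eq hv2]
  exact hn x

/-- If v : B → B is linear with v(x ∘ y) = v(x) ∘ y and v² = r_{a₀},
where every right multiplication of the commutative associative nilpotent product ∘ is
nilpotent, then v is nilpotent. -/
theorem stmt14 {B : Type*} [AddCommGroup B] [Module ℝ B] [FiniteDimensional ℝ B]
    (circB : B →ₗ[ℝ] B →ₗ[ℝ] B)
    (hcomm : ∀ x y : B, circB x y = circB y x)
    (hassoc : ∀ x y z : B, circB (circB x y) z = circB x (circB y z))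
    (hnil : ∀ z : B, ∃ n : ℕ, ∀ x : B, (fun x => circB x z)^[n] x = 0)
    (v : B →ₗ[ℝ] B)
    (hvc : ∀ x y : B, v (circB x y) = circB (v x) y)
    (a₀ : B)
    (hv2 : ∀ x : B, v (v x) = circB x a₀) :
    ∃ n : ℕ, ∀ x : B, (fun x => v x)^[n] x = 0 :=
  stmt14_general circB hnil v a₀ hv2
end

section
/- On the 2-dimensional Lie algebra aff(ℝ) = span(a,d) with [d,a] = a, define for λ, β ∈ ℝ the commutative product ∘ by d∘d = βa + λd, d∘a = a∘d = λa, a∘a = 0. Then ∘ is associative, satisfies the Frobenius identity with respect to ⟨d,a⟩ = 1, ⟨a,a⟩ = ⟨d,d⟩ = 0, and satisfies the Hertling–Manin relation HM(x,y,z,w) = 0 for all x,y,z,w. Moreover, if λ = 1 and β = 0 then d is a unit element for ∘. -/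
/-- aff(ℝ) encoded as ℝ × ℝ with a = (1,0) and d = (0,1): the Lie bracket [d,a] = a. -/
def affBr (p q : ℝ × ℝ) : ℝ × ℝ := (p.2 * q.1 - q.2 * p.1, 0)

/-- The Lorentzian form ⟨d,a⟩ = 1, ⟨a,a⟩ = ⟨d,d⟩ = 0 on aff(ℝ). -/
def affB (p q : ℝ × ℝ) : ℝ := p.1 * q.2 + q.1 * p.2

/-- The commutative product d∘d = βa + λd, d∘a = λa, a∘a = 0 on aff(ℝ). -/
def affCirc (lam beta : ℝ) (p q : ℝ × ℝ) : ℝ × ℝ :=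
  (beta * (p.2 * q.2) + lam * (p.1 * q.2 + q.1 * p.2), lam * (p.2 * q.2))

/-- The Hertling–Manin expression. -/
def HMf {G : Type*} [AddCommGroup G] (mul br : G → G → G) (x y z w : G) : G :=
  br (mul x y) (mul z w) - mul (br (mul x y) z) w - mul (br (mul x y) w) z
    - mul x (br y (mul z w)) + mul x (mul (br y z) w) + mul x (mul (br y w) z)
    - mul y (br x (mul z w)) + mul y (mul (br x z) w) + mul y (mul (br x w) z)

section

variable (lam beta : ℝ)

theorem affCirc_assoc (x y z : ℝ × ℝ) :
    affCirc lam beta (affCirc lam beta x y) z = affCirc lam beta x (affCirc lam beta y z) := by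
  ext <;> simp only [affCirc] <;> ring

theorem affB_affCirc (x y z : ℝ × ℝ) :
    affB (affCirc lam beta x y) z = affB x (affCirc lam beta y z) := by
  simp only [affB, affCirc]
  ring

theorem HMf_affCirc_affBr (x y z w : ℝ × ℝ) : HMf (affCirc lam beta) affBr x y z w = 0 := by
  ext <;> simp only [HMf, affCirc, affBr, Prod.fst_add, Prod.snd_add, Prod.fst_sub,
    Prod.snd_sub, Prod.fst_zero, Prod.snd_zero] <;> ring

end

theorem affCirc_one_zero_d_mul (p : ℝ × ℝ) : affCirc 1 0 (0, 1) p = p := by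
  ext <;> simp only [affCirc] <;> ring

/-- On aff(ℝ), the product ∘ is associative, satisfies the Frobenius
identity, satisfies the Hertling–Manin relation, and for λ = 1, β = 0 the element d
is a unit. -/
theorem stmt17 (lam beta : ℝ) :
    (∀ x y z : ℝ × ℝ,
      affCirc lam beta (affCirc lam beta x y) z = affCirc lam beta x (affCirc lam beta y z)) ∧
    (∀ x y z : ℝ × ℝ, affB (affCirc lam beta x y) z = affB x (affCirc lam beta y z)) ∧
    (∀ x y z w : ℝ × ℝ, HMf (affCirc lam beta) affBr x y z w = 0) ∧
    ((lam = 1 ∧ beta = 0) → ∀ p : ℝ × ℝ, affCirc lam beta ((0 : ℝ), (1 : ℝ)) p = p) := by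
  refine ⟨affCirc_assoc lam beta, affB_affCirc lam beta, HMf_affCirc_affBr lam beta, ?_⟩
  rintro ⟨rfl, rfl⟩
  exact affCirc_one_zero_d_mul
end
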